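/- Assume K = k_i + k_j = 2 and k_l = 0. Then the class modulo B of the cocycle (0, x⁻¹) forms a basis of the ℂ-vector space V/B; in particular dim_ℂ V/B = 1. -/

import Mathlib

noncomputable section

open LaurentPolynomial

/-- `L = ℂ[x, x⁻¹]`, the Laurent polynomials over `ℂ`. -/
abbrev L : Type := LaurentPolynomial ℂ

/-- The coefficient of `x^n` in a Laurent polynomial. -/
def coeffL (p : L) (n : ℤ) : ℂ := p.coeff n

lemma coeffL_zero (n : ℤ) : coeffL 0 n = 0 := rfl

lemma coeffL_add (a b : L) (n : ℤ) : coeffL (a + b) n = coeffL a n + coeffL b n := by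
  unfold coeffL; erw [Finsupp.add_apply]; rfl

lemma coeffL_smul (c : ℂ) (a : L) (n : ℤ) : coeffL (c • a) n = c * coeffL a n := by
  unfold coeffL; erw [Finsupp.smul_apply]; rfl

/-- `L₊`: Laurent polynomials involving only nonnegative powers of `x`. -/
def Lplus : Submodule ℂ L where
  carrier := {p | ∀ n : ℤ, n < 0 → coeffL p n = 0}
  zero_mem' := fun n _ => coeffL_zero n
  add_mem' := by intro a b ha hb n hn; rw [coeffL_add, ha n hn, hb n hn, add_zero]
  smul_mem' := by intro c p hp n hn; rw [coeffL_smul, hp n hn, mul_zero]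

/-- `L₋`: Laurent polynomials involving only nonpositive powers of `x`. -/
def Lminus : Submodule ℂ L where
  carrier := {p | ∀ n : ℤ, 0 < n → coeffL p n = 0}
  zero_mem' := fun n _ => coeffL_zero n
  add_mem' := by intro a b ha hb n hn; rw [coeffL_add, ha n hn, hb n hn, add_zero]
  smul_mem' := by intro c p hp n hn; rw [coeffL_smul, hp n hn, mul_zero]

/-- The derivative `d/dx` on Laurent polynomials. -/
def D (p : L) : L := Finsupp.sum p.coeff fun n a => ((n : ℂ) * a) • T (n - 1)

/-- `V = L × L`, the model of Čech 1-cochains with values in `T₂^{ij}`: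
a pair `(a, b)` encodes `a(x)ξᵢξⱼ∂/∂x + b(x)ξᵢξⱼξₗ∂/∂ξₗ` on `U₀ ∩ U₁`. -/
abbrev V : Type := L × L

/-- `B₀ = L₊ × L₊`: cochains holomorphic in `U₀`. -/
def B0 : Submodule ℂ V := Lplus.prod Lplus

/-- `B₁`: cochains holomorphic in `U₁`, i.e. pairs `(a, b)` with
`x^(K-2)·a ∈ L₋` and `x^K·(b - kl·x⁻¹·a) ∈ L₋`. -/
def B1 (K kl : ℤ) : Submodule ℂ V :=
  Lminus.comap ((LinearMap.mulLeft ℂ (T (K - 2))).comp (LinearMap.fst ℂ L L)) ⊓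
  Lminus.comap ((LinearMap.mulLeft ℂ (T K)).comp
    (LinearMap.snd ℂ L L - (kl : ℂ) • (LinearMap.mulLeft ℂ (T (-1))).comp (LinearMap.fst ℂ L L)))

/-- The coboundary subspace `B = B₀ + B₁`. -/
def B (K kl : ℤ) : Submodule ℂ V := B0 ⊔ B1 K kl

/-- Action of `e = ∂/∂x` on cocycles: `E(a, b) = (a′, b′)`. -/
def Eop : V → V := fun p => (D p.1, D p.2)

/-- Action of `f = ∂/∂y` on cocycles:
`F(a, b) = ((2−K)·x·a − x²·a′, kl·a − K·x·b − x²·b′)`. -/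
def Fop (K kl : ℤ) : V → V := fun p =>
  (((2 - K : ℤ) : ℂ) • (T 1 * p.1) - T 2 * D p.1,
   (kl : ℂ) • p.1 - (K : ℂ) • (T 1 * p.2) - T 2 * D p.2)

/-!
For `K = 2` and `kl = 0` the two components of a cochain decouple:
`B = (L₊ + L₋) × (L₊ + x⁻²·L₋)`.
The first factor is all of `L`, and the second consists of the Laurent polynomials without an
`x⁻¹` term. So `B` is the kernel of the residue of the second component, which identifies `V/B`
with `ℂ` and sends the class of `(0, x⁻¹)` to `1`.
-/

lemma coeffL_sub (a b : L) (n : ℤ) : coeffL (a - b) n = coeffL a n - coeffL b n := by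
  rw [sub_eq_add_neg, ← neg_one_smul ℂ b, coeffL_add, coeffL_smul]; ring

lemma coeffL_T (m n : ℤ) : coeffL (T m) n = if m = n then 1 else 0 :=
  Finsupp.single_apply

lemma coeffL_T_mul (m : ℤ) (f : L) (n : ℤ) : coeffL (T m * f) n = coeffL f (n - m) := by
  have h := AddMonoidAlgebra.coeff_single_mul_apply f (1 : ℂ) m n
  rwa [one_mul, neg_add_eq_sub] at h

def nonnegPart (p : L) : L := AddMonoidAlgebra.ofCoeff (p.coeff.filter (0 ≤ ·))

lemma coeffL_nonnegPart (p : L) (n : ℤ) :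
    coeffL (nonnegPart p) n = if 0 ≤ n then coeffL p n else 0 :=
  Finsupp.filter_apply _ _ _

lemma nonnegPart_mem_Lplus (p : L) : nonnegPart p ∈ Lplus := fun n hn => by
  rw [coeffL_nonnegPart, if_neg (not_le.mpr hn)]

lemma coeffL_sub_nonnegPart (p : L) (n : ℤ) :
    coeffL (p - nonnegPart p) n = if 0 ≤ n then 0 else coeffL p n := by
  rw [coeffL_sub, coeffL_nonnegPart]; split_ifs <;> simp

lemma sub_nonnegPart_mem_Lminus (p : L) : p - nonnegPart p ∈ Lminus := fun n hn => by
  rw [coeffL_sub_nonnegPart, if_pos hn.le]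

def sndResidue : V →ₗ[ℂ] ℂ where
  toFun p := coeffL p.2 (-1)
  map_add' p q := coeffL_add p.2 q.2 (-1)
  map_smul' c p := coeffL_smul c p.2 (-1)

lemma mem_B1_two_zero (a b : L) : (a, b) ∈ B1 2 0 ↔ a ∈ Lminus ∧ T 2 * b ∈ Lminus := by
  simp [B1]

lemma B_two_zero_eq_ker : B 2 0 = LinearMap.ker sndResidue := by
  refine le_antisymm (sup_le ?_ ?_) ?_
  · rintro ⟨a, b⟩ ⟨-, hb⟩
    exact hb (-1) (by norm_num)
  · rintro ⟨a, b⟩ hab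
    have h := (mem_B1_two_zero a b).mp hab |>.2 1 one_pos
    rwa [coeffL_T_mul] at h
  · rintro ⟨a, b⟩ (hb : coeffL b (-1) = 0)
    have hsplit : ((a, b) : V) =
        (nonnegPart a, nonnegPart b) + (a - nonnegPart a, b - nonnegPart b) := by
      simp
    rw [hsplit]
    refine Submodule.add_mem_sup ⟨nonnegPart_mem_Lplus a, nonnegPart_mem_Lplus b⟩ ?_
    refine (mem_B1_two_zero _ _).mpr ⟨sub_nonnegPart_mem_Lminus a, fun n hn => ?_⟩
    rw [coeffL_T_mul, coeffL_sub_nonnegPart]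
    split_ifs
    · rfl
    · rwa [show n - 2 = -1 by omega]

lemma exists_basis_quotient_ker_of_apply_eq_one {K M : Type*} [Field K] [AddCommGroup M] [Module K M]
    (φ : M →ₗ[K] K) (v : M) (hv : φ v = 1) :
    ∃ bas : Module.Basis (Fin 1) K (M ⧸ LinearMap.ker φ), bas 0 = Submodule.Quotient.mk v := by
  have hφ : Function.Surjective φ := fun c => ⟨c • v, by simp [hv]⟩
  refine ⟨(Module.Basis.singleton (Fin 1) K).map (φ.quotKerEquivOfSurjective hφ).symm, ?_⟩
  rw [Module.Basis.map_apply, Module.Basis.singleton_apply, LinearEquiv.symm_apply_eq]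
  exact hv.symm

theorem stmt_2_general (kl K : ℤ) (hK2 : K = 2) (hkl : kl = 0) :
    (∃ bas : Module.Basis (Fin 1) ℂ (V ⧸ B K kl),
      bas 0 = Submodule.Quotient.mk ((0, T (-1)) : V)) ∧
    Module.finrank ℂ (V ⧸ B K kl) = 1 := by
  subst hK2 hkl
  have hres : sndResidue ((0, T (-1)) : V) = 1 := by
    simp [sndResidue, coeffL_T]
  obtain ⟨bas, hbas⟩ := B_two_zero_eq_ker ▸ exists_basis_quotient_ker_of_apply_eq_one sndResidue _ hres
  exact ⟨⟨bas, hbas⟩, by rw [Module.finrank_eq_card_basis bas, Fintype.card_fin]⟩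

/-- If `K = kᵢ + kⱼ = 2` and `kl = 0`, the class mod `B` of the cocycle
`(0, x⁻¹)` forms a basis of `V/B`; in particular `dim_ℂ V/B = 1`. -/
theorem stmt_2 (ki kj kl K : ℤ) (hK : K = ki + kj) (hK2 : K = 2) (hkl : kl = 0) :
    (∃ bas : Module.Basis (Fin 1) ℂ (V ⧸ B K kl),
      bas 0 = Submodule.Quotient.mk ((0, T (-1)) : V)) ∧
    Module.finrank ℂ (V ⧸ B K kl) = 1 :=
  stmt_2_general kl K hK2 hkl
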